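/- For every integer k with 1 ≤ k ≤ N there exists a unique u ∈ U such that Du_ℓ = sin(kπℓ/N) for all ℓ ∈ ℤ, and this u satisfies Q^a(u) = λ_F(4 sin²(kπ/(2N))) · ‖Du‖²_{ℓ²ε}. -/

import Mathlib

/-!
The mode `w_ℓ = sin (θ ℓ)`, `θ = kπ/N`, is `2N`-periodic and odd with `w_N = 0`, so its sum over a
period vanishes and it has exactly one discrete antiderivative in `U`. The form `Q^a` depends only
on `w = Du` and is translation invariant, so summing over a period turns it into a Toeplitz form
`Σ_m c_m R(m)` in the autocorrelations `R(m) = Σ_ℓ w_ℓ w_{ℓ+m}`, `0 ≤ m ≤ 3`. For the sine mode the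
addition formula, together with `Σ_ℓ sin (θ ℓ) cos (θ ℓ) = 0` (an odd summand), gives
`R(m) = cos (m θ) R(0)`, and the double and triple angle formulas identify `Σ_m c_m cos (m θ)` with
`λ_F (2 - 2 cos θ) = λ_F (4 sin² (θ/2))`.
-/

open Finset

noncomputable section

/-- `u` is `2N`-periodic. -/
def IsPer (N : ℤ) (u : ℤ → ℝ) : Prop := ∀ ℓ : ℤ, u (ℓ + 2*N) = u ℓ

/-- `u` belongs to the displacement space `U`: `2N`-periodic with zero mean. -/
def InU (N : ℤ) (u : ℤ → ℝ) : Prop :=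
  IsPer N u ∧ ∑ ℓ ∈ Finset.Icc (-N+1) N, u ℓ = 0

/-- the scaled reference atomic spacing `ε = 1/N`. -/
def eps (N : ℤ) : ℝ := 1 / (N : ℝ)

/-- discrete derivative `(Dv)_ℓ = (v_ℓ - v_{ℓ-1})/ε`. -/
def Dd (N : ℤ) (v : ℤ → ℝ) : ℤ → ℝ := fun ℓ => (v ℓ - v (ℓ-1)) / eps N

/-- squared `ℓ²ε` norm: `ε Σ_{ℓ=-N+1}^{N} v_ℓ²`. -/
def nrm2 (N : ℤ) (v : ℤ → ℝ) : ℝ := eps N * ∑ ℓ ∈ Finset.Icc (-N+1) N, (v ℓ)^2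

/-- the atomistic second-variation quadratic form `Q^a`. -/
def Qa (N : ℤ) (pF p2F rF r2F rrF rr2F g1 g2 : ℝ) (u : ℤ → ℝ) : ℝ :=
  eps N * ∑ ℓ ∈ Finset.Icc (-N+1) N,
    (g2 * (rF * (Dd N u ℓ + Dd N u (ℓ+1))
        + r2F * (Dd N u (ℓ-1) + Dd N u ℓ + Dd N u (ℓ+1) + Dd N u (ℓ+2)))^2
     + g1 * (rrF * (Dd N u ℓ)^2 + rr2F * (Dd N u ℓ + Dd N u (ℓ-1))^2
           + rrF * (Dd N u (ℓ+1))^2 + rr2F * (Dd N u (ℓ+1) + Dd N u (ℓ+2))^2)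
     + (1/2) * (pF * ((Dd N u ℓ)^2 + (Dd N u (ℓ+1))^2)
           + p2F * ((Dd N u ℓ + Dd N u (ℓ-1))^2 + (Dd N u (ℓ+1) + Dd N u (ℓ+2))^2)))

/-- `Ã_F = φ''_F + 4φ''_{2F}`. -/
def Atil (pF p2F : ℝ) : ℝ := pF + 4*p2F

/-- `Â_F = 4G''_F(ρ'_F+2ρ'_{2F})² + 2G'_F(ρ''_F+4ρ''_{2F})`. -/
def Ahat (rF r2F rrF rr2F g1 g2 : ℝ) : ℝ := 4*g2*(rF + 2*r2F)^2 + 2*g1*(rrF + 4*rr2F)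

/-- `A_F = Â_F + Ã_F`. -/
def AFc (pF p2F rF r2F rrF rr2F g1 g2 : ℝ) : ℝ := Ahat rF r2F rrF rr2F g1 g2 + Atil pF p2F

/-- `B_F`. -/
def BFc (p2F rF r2F rr2F g1 g2 : ℝ) : ℝ :=
  -(p2F + g2*(rF^2 + 20*r2F^2 + 12*rF*r2F) + 2*g1*rr2F)

/-- `C_F`. -/
def CFc (rF r2F g2 : ℝ) : ℝ := g2*(8*r2F^2 + 2*rF*r2F)

/-- `D_F`. -/
def DFc (r2F g2 : ℝ) : ℝ := -(g2*r2F^2)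

/-- `λ_F(s) = A_F + B_F s + C_F s² + D_F s³`. -/
def lamF (pF p2F rF r2F rrF rr2F g1 g2 s : ℝ) : ℝ :=
  AFc pF p2F rF r2F rrF rr2F g1 g2 + BFc p2F rF r2F rr2F g1 g2 * s
    + CFc rF r2F g2 * s^2 + DFc r2F g2 * s^3

open Function Real

section IntervalSums

variable {M : Type*} [AddCommMonoid M]

theorem sum_Ioc_add_one_right {a b : ℤ} (h : a ≤ b) (g : ℤ → M) :
    ∑ ℓ ∈ Ioc a (b + 1), g ℓ = ∑ ℓ ∈ Ioc a b, g ℓ + g (b + 1) := by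
  rw [← insert_Ioc_right_eq_Ioc_add_one h, sum_insert (by simp), add_comm]

theorem sum_Ioc_eq_add_sum_Ioc_add_one {a b : ℤ} (h : a < b) (g : ℤ → M) :
    ∑ ℓ ∈ Ioc a b, g ℓ = g (a + 1) + ∑ ℓ ∈ Ioc (a + 1) b, g ℓ := by
  rw [← insert_Ioc_add_one_left_eq_Ioc h, sum_insert (by simp)]

end IntervalSums

section PeriodicSums

variable {M : Type*} [AddCommGroup M] {g : ℤ → M}

theorem Function.Periodic.sum_Ioc_add_eq {p : ℤ} (hg : Periodic g p) (hp : 0 ≤ p) (a : ℤ) :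
    ∑ ℓ ∈ Ioc a (a + p), g ℓ = ∑ ℓ ∈ Ioc 0 p, g ℓ := by
  have hstep : Periodic (fun b ↦ ∑ ℓ ∈ Ioc b (b + p), g ℓ) 1 := fun b ↦ by
    have h := sum_Ioc_add_one_right (le_add_of_nonneg_right hp : b ≤ b + p) g
    rw [sum_Ioc_eq_add_sum_Ioc_add_one (by omega) g, add_right_comm, hg, add_comm] at h
    exact add_right_cancel h
  simpa using hstep.int_mul_eq a

theorem Function.Periodic.sum_Icc_comp_add {N : ℤ} (hg : Periodic g (2 * N)) (hN : 0 ≤ N)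
    (c : ℤ) : ∑ ℓ ∈ Icc (-N + 1) N, g (ℓ + c) = ∑ ℓ ∈ Icc (-N + 1) N, g ℓ := by
  have hwin : Icc (-N + 1) N = Ioc (-N) (-N + 2 * N) := by
    rw [Icc_add_one_left_eq_Ioc]; ring_nf
  rw [hwin, hg.sum_Ioc_add_eq (by omega)]
  have hmap := sum_map (Ioc (-N) (-N + 2 * N)) (addRightEmbedding c) g
  rw [map_add_right_Ioc, add_right_comm, hg.sum_Ioc_add_eq (by omega)] at hmap
  simpa using hmap.symm

theorem Function.Odd.sum_Icc_neg_add_one_eq_zero [IsAddTorsionFree M] {N : ℤ} (hg : g.Odd)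
    (hN : 0 ≤ N) (hgN : g N = 0) : ∑ ℓ ∈ Icc (-N + 1) N, g ℓ = 0 := by
  have hsymm : (Icc (-N) N).map (Equiv.neg ℤ).toEmbedding = Icc (-N) N := by
    ext; simp only [mem_map_equiv, mem_Icc, Equiv.neg_symm, Equiv.neg_apply]; omega
  have h := hg.finsetSum_eq_zero hsymm
  rwa [← insert_Icc_add_one_left_eq_Icc (by omega : -N ≤ N), sum_insert (by simp), hg, hgN,
    neg_zero, zero_add] at h

end PeriodicSums

section Antidifference

variable {M : Type*} [AddCommGroup M]

def antidiff (g : ℤ → M) (ℓ : ℤ) : M := ∑ j ∈ Ioc 0 ℓ, g j - ∑ j ∈ Ioc ℓ 0, g j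

theorem antidiff_add_one_sub (g : ℤ → M) (ℓ : ℤ) :
    antidiff g (ℓ + 1) - antidiff g ℓ = g (ℓ + 1) := by
  rcases le_or_gt 0 ℓ with hℓ | hℓ
  · simp only [antidiff, sum_Ioc_add_one_right hℓ, Ioc_eq_empty_of_le (by omega : 0 ≤ ℓ + 1),
      Ioc_eq_empty_of_le hℓ, sum_empty]
    abel
  · simp only [antidiff, sum_Ioc_eq_add_sum_Ioc_add_one hℓ,
      Ioc_eq_empty_of_le (by omega : ℓ + 1 ≤ 0), Ioc_eq_empty_of_le hℓ.le, sum_empty]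
    abel

theorem periodic_antidiff {g : ℤ → M} {p : ℤ} (hg : Periodic g p) (hp : 0 ≤ p)
    (hg0 : ∑ ℓ ∈ Ioc 0 p, g ℓ = 0) : Periodic (antidiff g) p := by
  have hstep : Periodic (fun ℓ ↦ antidiff g (ℓ + p) - antidiff g ℓ) 1 := fun ℓ ↦ by
    have h₁ := antidiff_add_one_sub g (ℓ + p)
    have h₂ := antidiff_add_one_sub g ℓ
    rw [show ℓ + p + 1 = ℓ + 1 + p by ring, hg] at h₁
    dsimp only
    rw [sub_eq_iff_eq_add.mp h₁, sub_eq_iff_eq_add.mp h₂]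
    abel
  intro ℓ
  have h := hstep.int_mul_eq ℓ
  simp only [mul_one, zero_add, antidiff, Ioc_self, Ioc_eq_empty_of_le hp, sum_empty,
    hg0, sub_self] at h
  exact sub_eq_zero.mp h

end Antidifference

section DisplacementSpace

variable {N : ℤ}

theorem eps_ne_zero (hN : 0 < N) : eps N ≠ 0 :=
  one_div_ne_zero (by exact_mod_cast hN.ne')

theorem Dd_eq_iff (hN : 0 < N) {u f : ℤ → ℝ} {ℓ : ℤ} :
    Dd N u ℓ = f ℓ ↔ u ℓ - u (ℓ - 1) = eps N * f ℓ := by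
  rw [Dd, div_eq_iff (eps_ne_zero hN), mul_comm]

theorem cast_card_Icc_neg_add_one (hN : 0 ≤ N) : ((Icc (-N + 1) N).card : ℝ) = 2 * N := by
  rw [Int.card_Icc, show N + 1 - (-N + 1) = 2 * N by ring]
  exact_mod_cast Int.toNat_of_nonneg (by omega)

theorem InU.eq_of_Dd_eq (hN : 0 < N) {u v : ℤ → ℝ} (hu : InU N u) (hv : InU N v)
    (h : ∀ ℓ, Dd N u ℓ = Dd N v ℓ) : u = v := by
  have hstep : Periodic (fun ℓ ↦ u ℓ - v ℓ) 1 := fun ℓ ↦ by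
    have := (Dd_eq_iff hN).mp (h (ℓ + 1))
    rw [Dd, add_sub_cancel_right, mul_div_cancel₀ _ (eps_ne_zero hN)] at this
    linarith
  have hconst : ∀ ℓ, u ℓ - v ℓ = u 0 - v 0 := fun ℓ ↦ by simpa using hstep.int_mul_eq ℓ
  have hsum : (2 * N : ℝ) * (u 0 - v 0) = 0 := by
    rw [← cast_card_Icc_neg_add_one hN.le, ← nsmul_eq_mul, ← sum_const,
      ← sum_congr rfl fun ℓ _ ↦ hconst ℓ, sum_sub_distrib, hu.2, hv.2, sub_zero]
  have h2N : (2 * N : ℝ) ≠ 0 := by exact_mod_cast (by omega : 2 * N ≠ 0)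
  funext ℓ
  linarith [hconst ℓ, (mul_eq_zero.mp hsum).resolve_left h2N]

theorem exists_InU_Dd_eq (hN : 0 < N) {f : ℤ → ℝ} (hf : Periodic f (2 * N))
    (hf0 : ∑ ℓ ∈ Icc (-N + 1) N, f ℓ = 0) : ∃ u, InU N u ∧ ∀ ℓ, Dd N u ℓ = f ℓ := by
  have hF : Periodic (antidiff f) (2 * N) := by
    refine periodic_antidiff hf (by omega) ?_
    rwa [← hf.sum_Ioc_add_eq (by omega) (-N), ← Icc_add_one_left_eq_Ioc,
      show -N + 2 * N = N by ring]
  set m := (∑ ℓ ∈ Icc (-N + 1) N, antidiff f ℓ) / (2 * N)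
  refine ⟨fun ℓ ↦ eps N * (antidiff f ℓ - m), ⟨fun ℓ ↦ by simp only [hF ℓ], ?_⟩, fun ℓ ↦ ?_⟩
  · rw [← mul_sum, sum_sub_distrib, sum_const, nsmul_eq_mul, cast_card_Icc_neg_add_one hN.le]
    have : (2 * N : ℝ) ≠ 0 := by exact_mod_cast (by omega : 2 * N ≠ 0)
    simp only [m]; field_simp; ring
  · have h := antidiff_add_one_sub f (ℓ - 1)
    rw [sub_add_cancel] at h
    rw [Dd_eq_iff hN, ← h]
    ring

theorem existsUnique_InU_Dd_eq (hN : 0 < N) {f : ℤ → ℝ} (hf : Periodic f (2 * N))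
    (hf0 : ∑ ℓ ∈ Icc (-N + 1) N, f ℓ = 0) : ∃! u, InU N u ∧ ∀ ℓ, Dd N u ℓ = f ℓ := by
  obtain ⟨u, hu, hDu⟩ := exists_InU_Dd_eq hN hf hf0
  exact ⟨u, ⟨hu, hDu⟩, fun v ⟨hv, hDv⟩ ↦ hv.eq_of_Dd_eq hN hu fun ℓ ↦ (hDv ℓ).trans (hDu ℓ).symm⟩

end DisplacementSpace

section Autocorrelation

variable {N : ℤ}

def autocorr (N : ℤ) (w : ℤ → ℝ) (m : ℤ) : ℝ := ∑ ℓ ∈ Icc (-N + 1) N, w ℓ * w (ℓ + m)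

theorem nrm2_eq_eps_mul_autocorr_zero (w : ℤ → ℝ) : nrm2 N w = eps N * autocorr N w 0 := by
  simp only [nrm2, autocorr, add_zero, sq]

theorem Function.Periodic.sum_mul_comp_add {w : ℤ → ℝ} (hw : Periodic w (2 * N)) (hN : 0 ≤ N)
    (a b : ℤ) : ∑ ℓ ∈ Icc (-N + 1) N, w (ℓ + a) * w (ℓ + b) = autocorr N w (b - a) := by
  have h := (hw.mul (hw.add_const (b - a))).sum_Icc_comp_add hN a
  simp only [Pi.mul_apply, add_assoc, add_sub_cancel] at h
  rw [autocorr, h]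

def qaSymbolCoeff (pF p2F rF r2F rrF rr2F g1 g2 : ℝ) : Fin 4 → ℝ :=
  ![2 * g2 * (r2F ^ 2 + (rF + r2F) ^ 2) + 2 * g1 * (rrF + 2 * rr2F) + pF + 2 * p2F,
    2 * g2 * (rF + r2F) * (rF + 3 * r2F) + 4 * g1 * rr2F + 2 * p2F,
    4 * g2 * (rF + r2F) * r2F,
    2 * g2 * r2F ^ 2]

theorem Qa_eq_sum_autocorr {u : ℤ → ℝ} (hw : Periodic (Dd N u) (2 * N)) (hN : 0 ≤ N)
    (pF p2F rF r2F rrF rr2F g1 g2 : ℝ) :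
    Qa N pF p2F rF r2F rrF rr2F g1 g2 u =
      eps N *
        ∑ m : Fin 4, qaSymbolCoeff pF p2F rF r2F rrF rr2F g1 g2 m * autocorr N (Dd N u) m := by
  set w := Dd N u
  rw [Qa]
  congr 1
  -- every product is written as `w (ℓ + a) * w (ℓ + b)`, the shape of `sum_mul_comp_add`
  calc _ = ∑ ℓ ∈ Icc (-N + 1) N,
        ((g2 * r2F ^ 2 + g1 * rr2F + p2F / 2)
            * (w (ℓ + -1) * w (ℓ + -1) + w (ℓ + 2) * w (ℓ + 2))
          + (g2 * (rF + r2F) ^ 2 + g1 * (rrF + rr2F) + (pF + p2F) / 2)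
            * (w (ℓ + 0) * w (ℓ + 0) + w (ℓ + 1) * w (ℓ + 1))
          + (2 * g2 * (rF + r2F) * r2F + 2 * g1 * rr2F + p2F)
            * (w (ℓ + -1) * w (ℓ + 0) + w (ℓ + 1) * w (ℓ + 2))
          + 2 * g2 * (rF + r2F) ^ 2 * (w (ℓ + 0) * w (ℓ + 1))
          + 2 * g2 * (rF + r2F) * r2F * (w (ℓ + -1) * w (ℓ + 1) + w (ℓ + 0) * w (ℓ + 2))
          + 2 * g2 * r2F ^ 2 * (w (ℓ + -1) * w (ℓ + 2))) :=
        sum_congr rfl fun ℓ _ ↦ by simp only [add_zero, ← sub_eq_add_neg]; ring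
    _ = _ := by
      simp only [sum_add_distrib, ← mul_sum, hw.sum_mul_comp_add hN, Fin.sum_univ_four,
        qaSymbolCoeff, Matrix.cons_val_zero, Matrix.cons_val_one, Matrix.cons_val_two,
        Matrix.cons_val_three, Matrix.head_cons, Matrix.tail_cons]
      norm_num
      ring

end Autocorrelation

section SineMode

variable {N : ℤ} {θ : ℝ}

theorem periodic_sin_mul_intCast (hθ : sin (θ * N) = 0) :
    Periodic (fun ℓ : ℤ ↦ sin (θ * ℓ)) (2 * N) := fun ℓ ↦ by
  have hcos : cos (2 * (θ * N)) = 1 := by rw [cos_two_mul_eq_one_sub, hθ]; ring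
  have hsin : sin (2 * (θ * N)) = 0 := by rw [sin_two_mul, hθ]; ring
  simp only [Int.cast_add, Int.cast_mul, Int.cast_ofNat]
  rw [show θ * (ℓ + 2 * N) = θ * ℓ + 2 * (θ * N) by ring, sin_add, hcos, hsin]
  ring

theorem autocorr_sin_mul_intCast (hN : 0 ≤ N) (hθ : sin (θ * N) = 0) (m : ℤ) :
    autocorr N (fun ℓ ↦ sin (θ * ℓ)) m = cos (m * θ) * autocorr N (fun ℓ ↦ sin (θ * ℓ)) 0 := by
  have hcross : ∑ ℓ ∈ Icc (-N + 1) N, sin (θ * ℓ) * cos (θ * ℓ) = 0 := by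
    refine Function.Odd.sum_Icc_neg_add_one_eq_zero (fun ℓ ↦ ?_) hN (by simp [hθ])
    simp only [Int.cast_neg, mul_neg, sin_neg, cos_neg, neg_mul]
  calc autocorr N (fun ℓ ↦ sin (θ * ℓ)) m
      = ∑ ℓ ∈ Icc (-N + 1) N,
          (cos (m * θ) * (sin (θ * ℓ) * sin (θ * ℓ)) + sin (m * θ) * (sin (θ * ℓ) * cos (θ * ℓ))) :=
        sum_congr rfl fun ℓ _ ↦ by push_cast; rw [mul_add, sin_add, mul_comm θ (m : ℝ)]; ring
    _ = _ := by
      rw [sum_add_distrib, ← mul_sum, ← mul_sum, hcross, autocorr]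
      simp

end SineMode

theorem lamF_four_mul_sin_sq_half (pF p2F rF r2F rrF rr2F g1 g2 x : ℝ) :
    lamF pF p2F rF r2F rrF rr2F g1 g2 (4 * sin (x / 2) ^ 2) =
      ∑ m : Fin 4, qaSymbolCoeff pF p2F rF r2F rrF rr2F g1 g2 m * cos (m * x) := by
  have hs : 4 * sin (x / 2) ^ 2 = 2 - 2 * cos x := by
    rw [sin_sq_eq_half_sub, mul_div_cancel₀ x two_ne_zero]; ring
  simp only [Fin.sum_univ_four, qaSymbolCoeff, Matrix.cons_val_zero, Matrix.cons_val_one,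
    Matrix.cons_val_two, Matrix.cons_val_three, Matrix.head_cons, Matrix.tail_cons]
  norm_num
  rw [hs, cos_two_mul, cos_three_mul]
  simp only [lamF, AFc, BFc, CFc, DFc, Ahat, Atil]
  ring

theorem fourier_mode_eigenvalue_general (N : ℤ) (hN : 1 ≤ N)
    (pF p2F rF r2F rrF rr2F g1 g2 : ℝ) (k : ℤ) :
    (∃! u : ℤ → ℝ, InU N u ∧
      ∀ ℓ : ℤ, Dd N u ℓ = Real.sin ((k:ℝ) * Real.pi * (ℓ:ℝ) / (N:ℝ))) ∧
    (∀ u : ℤ → ℝ, InU N u →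
      (∀ ℓ : ℤ, Dd N u ℓ = Real.sin ((k:ℝ) * Real.pi * (ℓ:ℝ) / (N:ℝ))) →
      Qa N pF p2F rF r2F rrF rr2F g1 g2 u
        = lamF pF p2F rF r2F rrF rr2F g1 g2
            (4 * Real.sin ((k:ℝ) * Real.pi / (2*(N:ℝ)))^2) * nrm2 N (Dd N u)) := by
  set θ := k * π / N
  have hN₀ : (N : ℝ) ≠ 0 := by exact_mod_cast (by omega : N ≠ 0)
  have hmode : ∀ ℓ : ℤ, sin (k * π * ℓ / N) = sin (θ * ℓ) := fun ℓ ↦ by rw [mul_div_right_comm]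
  have hθ : sin (θ * N) = 0 := by rw [div_mul_cancel₀ _ hN₀, sin_int_mul_pi]
  have hper := periodic_sin_mul_intCast hθ
  simp only [hmode]
  refine ⟨existsUnique_InU_Dd_eq (by omega) hper ?_, fun u _ hDu ↦ ?_⟩
  · exact Function.Odd.sum_Icc_neg_add_one_eq_zero (fun ℓ ↦ by simp) (by omega) hθ
  · have hw : Dd N u = fun ℓ : ℤ ↦ sin (θ * ℓ) := funext hDu
    rw [Qa_eq_sum_autocorr (hw ▸ hper) (by omega), nrm2_eq_eps_mul_autocorr_zero, hw,
      show k * π / (2 * N) = θ / 2 by ring, lamF_four_mul_sin_sq_half, sum_mul, mul_sum]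
    refine sum_congr rfl fun m _ ↦ ?_
    rw [autocorr_sin_mul_intCast (by omega) hθ]
    push_cast
    ring

/-- existence/uniqueness of the Fourier eigenmode and its Rayleigh quotient. -/
theorem fourier_mode_eigenvalue (N : ℤ) (hN : 1 ≤ N)
    (pF p2F rF r2F rrF rr2F g1 g2 : ℝ) (k : ℤ) (hk1 : 1 ≤ k) (hkN : k ≤ N) :
    (∃! u : ℤ → ℝ, InU N u ∧
      ∀ ℓ : ℤ, Dd N u ℓ = Real.sin ((k:ℝ) * Real.pi * (ℓ:ℝ) / (N:ℝ))) ∧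
    (∀ u : ℤ → ℝ, InU N u →
      (∀ ℓ : ℤ, Dd N u ℓ = Real.sin ((k:ℝ) * Real.pi * (ℓ:ℝ) / (N:ℝ))) →
      Qa N pF p2F rF r2F rrF rr2F g1 g2 u
        = lamF pF p2F rF r2F rrF rr2F g1 g2
            (4 * Real.sin ((k:ℝ) * Real.pi / (2*(N:ℝ)))^2) * nrm2 N (Dd N u)) :=
  fourier_mode_eigenvalue_general N hN pF p2F rF r2F rrF rr2F g1 g2 k
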